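/- arXiv:2603.05100 — 2 statements merged into one kernel-verified Lean document; each statement's English description precedes it below -/
import Mathlib

section
/- If G is a ⌈2t⌉-regular graph where t is the toughness of G, then G is minimally tough. -/
/-!
Delete an edge `uv` of the `d`-regular graph `G`, `d = ⌈2t⌉`. In `G - uv` the vertex `u` has
`d - 1` neighbours, and removing them isolates `u` from `v`; this separator gives
`τ(G - uv) ≤ (d - 1) / 2`, which is `< t` because `d < 2t + 1`.
-/

open SimpleGraph
open scoped ENNReal NNReal

/-- The number of connected components of a graph. -/
noncomputable def componentCount {V : Type*} (G : SimpleGraph V) : ℕ :=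
  Nat.card G.ConnectedComponent

/-- `S` is a separator of `G` if `G - S` has at least two connected components. -/
def SimpleGraph.IsSeparator {V : Type*} (G : SimpleGraph V) (S : Finset V) : Prop :=
  2 ≤ componentCount (G.induce ((↑S : Set V)ᶜ))

/-- The toughness of a graph, as an extended nonnegative real:
the infimum over all separators `S` of `|S| / c(G - S)`; `∞` if there is no separator. -/
noncomputable def SimpleGraph.toughness {V : Type*} (G : SimpleGraph V) : ℝ≥0∞ :=
  ⨅ (S : Finset V) (_ : G.IsSeparator S),
    (S.card : ℝ≥0∞) / (componentCount (G.induce ((↑S : Set V)ᶜ)) : ℝ≥0∞)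

/-- A graph is minimally tough if deleting any edge strictly decreases the toughness. -/
def SimpleGraph.MinimallyTough {V : Type*} (G : SimpleGraph V) : Prop :=
  ∀ e ∈ G.edgeSet, (G.deleteEdges {e}).toughness < G.toughness

/-- The degree of a vertex (as the cardinality of its neighbourhood). -/
noncomputable def SimpleGraph.deg {V : Type*} (G : SimpleGraph V) (v : V) : ℕ :=
  (G.neighborSet v).ncard

/-- A graph is `d`-regular if every vertex has degree `d`. -/
def SimpleGraph.RegularOfDegree {V : Type*} (G : SimpleGraph V) (d : ℕ) : Prop :=
  ∀ v, G.deg v = d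

/-- Two `u`-`v` walks are internally disjoint if `u` and `v` are their only common vertices. -/
def SimpleGraph.InternallyDisjoint {V : Type*} {G : SimpleGraph V} {u v : V}
    (p q : G.Walk u v) : Prop :=
  ∀ w, w ∈ p.support → w ∈ q.support → w = u ∨ w = v

/-- The local connectivity `κ_G(u,v)`: the maximum number of pairwise internally
vertex-disjoint `u`-`v` paths in `G`. -/
noncomputable def SimpleGraph.localConnectivity {V : Type*} (G : SimpleGraph V) (u v : V) : ℕ :=
  sSup {n | ∃ P : Set (G.Path u v), P.ncard = n ∧
    P.Pairwise fun p q => SimpleGraph.InternallyDisjoint (p : G.Walk u v) (q : G.Walk u v)}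

/-- A graph is `k`-connected if it has more than `k` vertices and removing fewer than `k`
vertices leaves it connected. -/
def SimpleGraph.IsKConnected {V : Type*} (G : SimpleGraph V) (k : ℕ) : Prop :=
  k < Nat.card V ∧ ∀ S : Finset V, S.card < k → (G.induce ((↑S : Set V)ᶜ)).Connected

/-- The connectivity `κ(G)` of a graph: the largest `k` such that `G` is `k`-connected. -/
noncomputable def SimpleGraph.connectivity {V : Type*} (G : SimpleGraph V) : ℕ :=
  sSup {k | G.IsKConnected k}

/-- The maximum size of a matching in `G`. -/
noncomputable def SimpleGraph.maxMatching {V : Type*} (G : SimpleGraph V) : ℕ :=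
  sSup {n | ∃ M : G.Subgraph, M.IsMatching ∧ M.edgeSet.ncard = n}

/-- A walk has a chord if some edge of `G` joins two of its vertices but is not an
edge of the walk. -/
def SimpleGraph.Walk.HasChord {V : Type*} {G : SimpleGraph V} {v : V} (c : G.Walk v v) : Prop :=
  ∃ x y, x ∈ c.support ∧ y ∈ c.support ∧ G.Adj x y ∧ s(x, y) ∉ c.edges

/-- A graph is chordal if every cycle of length at least 4 has a chord. -/
def SimpleGraph.IsChordal {V : Type*} (G : SimpleGraph V) : Prop :=
  ∀ (v : V) (c : G.Walk v v), c.IsCycle → 4 ≤ c.length → c.HasChord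

/-- A vertex is universal if it is adjacent to all other vertices. -/
def SimpleGraph.IsUniversalVertex {V : Type*} (G : SimpleGraph V) (v : V) : Prop :=
  ∀ w, w ≠ v → G.Adj v w

namespace SimpleGraph

variable {V : Type*} (G : SimpleGraph V)

theorem toughness_le_card_div_two {S : Finset V} (hS : G.IsSeparator S) :
    G.toughness ≤ (S.card : ℝ≥0∞) / 2 :=
  calc G.toughness ≤ (S.card : ℝ≥0∞) / (componentCount (G.induce ((↑S : Set V)ᶜ)) : ℝ≥0∞) :=
        iInf₂_le S hS
    _ ≤ (S.card : ℝ≥0∞) / 2 := by gcongr; exact_mod_cast hS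

theorem isSeparator_of_not_reachable [Finite V] {S : Finset V} {u v : V} (hu : u ∉ S)
    (hv : v ∉ S) (h : ¬ (G.induce ((↑S : Set V)ᶜ)).Reachable ⟨u, hu⟩ ⟨v, hv⟩) :
    G.IsSeparator S :=
  have : Nontrivial (G.induce ((↑S : Set V)ᶜ)).ConnectedComponent :=
    ⟨_, _, fun huv => h (ConnectedComponent.exact huv)⟩
  Finite.one_lt_card_iff_nontrivial.mpr this

theorem isSeparator_neighborFinset [Finite V] {u v : V} [Fintype (G.neighborSet u)]
    (huv : u ≠ v) (hnadj : ¬ G.Adj u v) : G.IsSeparator (G.neighborFinset u) := by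
  have hu : u ∉ G.neighborFinset u := by simp
  have hv : v ∉ G.neighborFinset u := by simpa using hnadj
  refine G.isSeparator_of_not_reachable hu hv fun ⟨p⟩ => ?_
  cases p with
  | nil => exact huv rfl
  | @cons _ w _ hadj _ => exact w.2 (by simpa using hadj)

theorem neighborSet_deleteEdges_self (u v : V) :
    (G.deleteEdges {s(u, v)}).neighborSet u = G.neighborSet u \ {v} := by
  ext w
  simp only [mem_neighborSet, deleteEdges_adj, Set.mem_sdiff, Set.mem_singleton_iff,
    Sym2.eq_iff, true_and, and_congr_right_iff]
  intro hadj
  constructor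
  · rintro h rfl; exact h (Or.inl rfl)
  · rintro hw (rfl | ⟨rfl, rfl⟩)
    exacts [hw rfl, G.loopless.irrefl _ hadj]

theorem deg_deleteEdges_of_adj {u v : V} (h : G.Adj u v) :
    (G.deleteEdges {s(u, v)}).deg u = G.deg u - 1 := by
  rw [deg, deg, neighborSet_deleteEdges_self]
  exact Set.ncard_sdiff_singleton_of_mem h

end SimpleGraph

theorem ENNReal.natCast_ceil_two_mul_sub_one_div_two_lt {t : ℝ≥0} (ht : 0 < t) :
    ((⌈2 * t⌉₊ - 1 : ℕ) : ℝ≥0∞) / 2 < t := by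
  have : ((⌈2 * t⌉₊ - 1 : ℕ) : ℝ≥0) < t * 2 :=
    mul_comm 2 t ▸ Nat.lt_ceil.mp (Nat.sub_one_lt (Nat.ceil_pos.mpr (by positivity)).ne')
  rw [ENNReal.div_lt_iff (by simp) (by simp)]
  exact_mod_cast this

/-- If `G` is `⌈2t⌉`-regular, where `t` is the toughness of `G`, then `G` is minimally
tough. -/
theorem stmt_8 {V : Type*} [Fintype V] (G : SimpleGraph V) (t : ℝ≥0)
    (ht : G.toughness = (t : ℝ≥0∞)) (hreg : G.RegularOfDegree ⌈2 * t⌉₊) :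
    G.MinimallyTough := by
  classical
  rintro ⟨u, v⟩ (huv : G.Adj u v)
  set G' := G.deleteEdges {s(u, v)}
  have hcard : (G'.neighborFinset u).card = ⌈2 * t⌉₊ - 1 := by
    rw [← Set.ncard_coe_finset, coe_neighborFinset, ← deg, G.deg_deleteEdges_of_adj huv, hreg]
  have hsep : G'.IsSeparator (G'.neighborFinset u) :=
    G'.isSeparator_neighborFinset huv.ne (by simp [G'])
  have htpos : 0 < t := by
    have : 0 < G.deg u := (Set.ncard_pos (Set.toFinite _)).mpr ⟨v, huv⟩
    rw [hreg, Nat.ceil_pos] at this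
    exact pos_of_mul_pos_right this zero_le_two
  calc G'.toughness ≤ ((G'.neighborFinset u).card : ℝ≥0∞) / 2 := G'.toughness_le_card_div_two hsep
    _ = ((⌈2 * t⌉₊ - 1 : ℕ) : ℝ≥0∞) / 2 := by rw [hcard]
    _ < t := ENNReal.natCast_ceil_two_mul_sub_one_div_two_lt htpos
    _ = G.toughness := ht.symm
end

section
/- Let G be a graph with toughness t having a universal vertex v, and let t' be the toughness of G' = G − v. Then G is minimally tough if and only if G' is ⌈2t'⌉-regular and ⌈2t⌉ = ⌈2t'⌉ + 1. -/
open SimpleGraph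
open scoped ENNReal NNReal

/-- A vertex is universal if it is adjacent to all other vertices. -/
def SimpleGraph.IsUniversalVtx {V : Type*} (G : SimpleGraph V) (v : V) : Prop :=
  ∀ w, w ≠ v → G.Adj v w

/-!
Deleting the edge `vw` (with `v` universal) can only lower the toughness through a separator
`S ∌ v` of `G - vw`; there `v` still reaches every vertex but `w`, so `G - vw - S` has exactly
the two components `{w}` and the rest. Hence `N_{G'}(w) ⊆ S` and `deg_{G'} w ≤ |S| < 2t`.
Conversely `N(a) \ {b}` isolates `a` in `G - ab`, so `τ(G - ab) ≤ (deg a - 1) / 2`, and the same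
trick (or a count, when `w` is universal in `G'`) gives `2t' ≤ deg_{G'} w`. Adding `v` to a
separator of `G'` gives `t ≤ t' + 1/2`, and the integers `⌈2t'⌉ ≤ deg_{G'} w < ⌈2t⌉ ≤ ⌈2t'⌉ + 1`
are squeezed.
-/

namespace SimpleGraph

variable {V : Type*} {G : SimpleGraph V}

lemma componentCount_congr {W : Type*} {H : SimpleGraph W} (φ : G ≃g H) :
    componentCount G = componentCount H :=
  Nat.card_congr φ.connectedComponentEquiv

lemma componentCount_le_one_of_preconnected [Finite V] (h : G.Preconnected) :
    componentCount G ≤ 1 :=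
  Finite.card_le_one_iff_subsingleton.2 h.subsingleton_connectedComponent

lemma componentCount_le_two {x y : V} (h : ∀ z, G.Reachable x z ∨ G.Reachable y z) :
    componentCount G ≤ 2 := by
  have hsurj : Function.Surjective ![G.connectedComponentMk x, G.connectedComponentMk y] := by
    refine ConnectedComponent.ind fun z => ?_
    rcases h z with hz | hz
    · exact ⟨0, ConnectedComponent.sound hz⟩
    · exact ⟨1, ConnectedComponent.sound hz⟩
  simpa [componentCount] using Nat.card_le_card_of_surjective _ hsurj

lemma two_le_componentCount [Finite V] {x y : V} (h : ¬ G.Reachable x y) :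
    2 ≤ componentCount G :=
  Finite.one_lt_card_iff_nontrivial.2
    ⟨_, _, fun hxy => h (ConnectedComponent.exact hxy)⟩

def induceInduceIso (s : Set V) (t : Set s) :
    (G.induce s).induce t ≃g G.induce (Subtype.val '' t) where
  toEquiv := (Equiv.subtypeSubtypeEquivSubtypeExists _ _).trans
    (Equiv.subtypeEquivRight fun _ => by simp)
  map_rel_iff' := Iff.rfl

lemma IsSeparator.not_preconnected [Finite V] {S : Finset V} (h : G.IsSeparator S) :
    ¬ (G.induce (↑S)ᶜ).Preconnected := fun hc =>
  absurd (componentCount_le_one_of_preconnected hc) (by unfold IsSeparator at h; omega)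

lemma isSeparator_of_not_reachable_s14 [Finite V] {S : Finset V} {x y : V} (hx : x ∉ S) (hy : y ∉ S)
    (h : ¬ (G.induce (↑S)ᶜ).Reachable ⟨x, hx⟩ ⟨y, hy⟩) : G.IsSeparator S :=
  two_le_componentCount h

lemma toughness_le_of_isSeparator {S : Finset V} (h : G.IsSeparator S) :
    G.toughness ≤ S.card / componentCount (G.induce (↑S)ᶜ) :=
  iInf₂_le S h

lemma IsSeparator.toughness_le_half {S : Finset V} (h : G.IsSeparator S) :
    G.toughness ≤ S.card / 2 :=
  (toughness_le_of_isSeparator h).trans (ENNReal.div_le_div_left (by exact_mod_cast h) _)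

lemma exists_isSeparator_of_toughness_ne_top (h : G.toughness ≠ ⊤) : ∃ S, G.IsSeparator S := by
  by_contra! hS
  exact h (by simp [toughness, hS])

lemma IsSeparator.card_add_two_le [Finite V] {S : Finset V} (h : G.IsSeparator S) :
    S.card + 2 ≤ Nat.card V := by
  have hcomp : componentCount (G.induce (↑S)ᶜ) ≤ ((↑S : Set V)ᶜ).ncard :=
    (Nat.card_le_card_of_surjective _ Quot.mk_surjective).trans_eq
      (Nat.card_coe_set_eq _)
  have := Set.ncard_add_ncard_compl (S : Set V)
  rw [Set.ncard_coe_finset] at this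
  unfold IsSeparator at h
  omega

lemma toughness_le_of_neighborSet_subset [Finite V] {S : Finset V} {x y : V} (hxy : x ≠ y)
    (hx : x ∉ S) (hy : y ∉ S) (hN : G.neighborSet x ⊆ S) : G.toughness ≤ S.card / 2 := by
  refine IsSeparator.toughness_le_half (isSeparator_of_not_reachable_s14 hx hy fun hr => ?_)
  obtain ⟨p⟩ := hr
  cases p with
  | nil => exact hxy rfl
  | cons hadj _ => exact (Set.mem_compl_iff _ _).1 (Subtype.prop _) (hN hadj)

theorem two_mul_toughness_le_deg [Finite V] (h : G.toughness ≠ ⊤) (w : V) :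
    2 * G.toughness ≤ G.deg w := by
  rw [mul_comm, ← ENNReal.le_div_iff_mul_le (by simp) (by simp)]
  by_cases hw : ∃ u, u ≠ w ∧ ¬ G.Adj w u
  · obtain ⟨u, huw, hwu⟩ := hw
    have hfin := (G.neighborSet w).toFinite
    rw [deg, Set.ncard_eq_toFinset_card _ hfin]
    exact toughness_le_of_neighborSet_subset huw.symm (by simp) (by simpa using hwu) (by simp)
  · push Not at hw
    obtain ⟨S, hS⟩ := exists_isSeparator_of_toughness_ne_top h
    have hN : G.neighborSet w = {w}ᶜ := Set.ext fun u => ⟨fun h => h.ne', hw u⟩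
    have hdeg := Set.ncard_add_ncard_compl {w}
    rw [Set.ncard_singleton, ← hN] at hdeg
    refine hS.toughness_le_half.trans (ENNReal.div_le_div_right ?_ _)
    have := hS.card_add_two_le
    rw [deg]
    exact_mod_cast (by omega : S.card ≤ (G.neighborSet w).ncard)

lemma toughness_deleteEdges_le [Finite V] {a b : V} (hab : G.Adj a b) :
    (G.deleteEdges {s(a, b)}).toughness ≤ ((G.deg a - 1 : ℕ) : ℝ≥0∞) / 2 := by
  have hN : (G.deleteEdges {s(a, b)}).neighborSet a = G.neighborSet a \ {b} := by
    ext u; simp [hab.ne]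
  have hfin := (G.neighborSet a \ {b}).toFinite
  rw [deg, ← Set.ncard_sdiff_singleton_of_mem (s := G.neighborSet a) hab,
    Set.ncard_eq_toFinset_card _ hfin]
  exact toughness_le_of_neighborSet_subset hab.ne (by simp) (by simp) (by simp [hN])

lemma deg_induce_compl_singleton (v : V) (a : V) (ha : a ≠ v) :
    (G.induce {v}ᶜ).deg ⟨a, ha⟩ = (G.neighborSet a \ {v}).ncard := by
  rw [deg, ← Set.ncard_image_of_injective _ Subtype.val_injective]
  congr 1
  ext u
  simp [and_comm]

lemma deg_eq_deg_induce_compl_singleton_add_one [Finite V] {v a : V} (ha : a ≠ v)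
    (hav : G.Adj a v) : G.deg a = (G.induce {v}ᶜ).deg ⟨a, ha⟩ + 1 := by
  rw [deg_induce_compl_singleton, Set.ncard_sdiff_singleton_add_one (s := G.neighborSet a) hav]
  rfl

lemma componentCount_induce_compl_insert [DecidableEq V] (v : V) (S : Finset ({v}ᶜ : Set V)) :
    componentCount (G.induce (↑(insert v (S.map (Function.Embedding.subtype _))) : Set V)ᶜ) =
      componentCount ((G.induce {v}ᶜ).induce (↑S)ᶜ) := by
  have hcompl : (↑(insert v (S.map (Function.Embedding.subtype _))) : Set V)ᶜ =
      Subtype.val '' (↑S : Set ({v}ᶜ : Set V))ᶜ := by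
    ext x
    by_cases hx : x = v <;> simp [hx]
  rw [componentCount_congr (induceInduceIso _ _), hcompl]

theorem toughness_le_toughness_induce_compl_singleton_add_half (v : V) :
    G.toughness ≤ (G.induce {v}ᶜ).toughness + 1 / 2 := by
  classical
  simp_rw [toughness, ENNReal.iInf_add]
  refine le_iInf₂ fun S hS => ?_
  set T := insert v (S.map (Function.Embedding.subtype _))
  have hT : T.card = S.card + 1 := by
    rw [Finset.card_insert_of_notMem (by simp), Finset.card_map]
  have hc := componentCount_induce_compl_insert (G := G) v S
  have hTS : G.IsSeparator T := by rwa [IsSeparator, hc]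
  calc G.toughness ≤ T.card / componentCount (G.induce (↑T)ᶜ) := toughness_le_of_isSeparator hTS
    _ = S.card / componentCount ((G.induce {v}ᶜ).induce (↑S)ᶜ)
        + 1 / componentCount ((G.induce {v}ᶜ).induce (↑S)ᶜ) := by
      rw [hT, hc, Nat.cast_add, Nat.cast_one, ENNReal.add_div]
    _ ≤ _ := add_le_add_right (ENNReal.div_le_div_left (by exact_mod_cast hS) _) _

lemma induce_deleteEdges_of_mem {S : Set V} {v w : V} (hv : v ∈ S) :
    (G.deleteEdges {s(v, w)}).induce Sᶜ = G.induce Sᶜ := by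
  ext a b
  simp only [induce_adj, deleteEdges_adj, Set.mem_singleton_iff, Sym2.eq_iff, and_iff_left_iff_imp]
  rintro - (⟨rfl, -⟩ | ⟨-, rfl⟩)
  exacts [a.2 hv, b.2 hv]

lemma exists_isSeparator_lt_of_toughness_lt {a : ℝ≥0∞} (h : G.toughness < a) :
    ∃ S : Finset V, G.IsSeparator S ∧ S.card / componentCount (G.induce (↑S)ᶜ) < a := by
  simpa only [toughness, iInf_lt_iff, exists_prop] using h

section UniversalVertex

variable {v w : V}

lemma IsUniversalVtx.reachable_induce_deleteEdges (hv : G.IsUniversalVtx v) {S : Finset V}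
    (hvS : v ∉ S) (z : ((↑S : Set V)ᶜ : Set V)) (hzw : (z : V) ≠ w) :
    ((G.deleteEdges {s(v, w)}).induce (↑S)ᶜ).Reachable ⟨v, hvS⟩ z := by
  by_cases hzv : (z : V) = v
  · rw [show z = ⟨v, hvS⟩ from Subtype.ext hzv]
  · refine Adj.reachable ?_
    simp [hv z hzv, hzv, hzw]

lemma IsUniversalVtx.notMem_of_isSeparator_deleteEdges [Finite V] (hv : G.IsUniversalVtx v)
    {S : Finset V} (hvS : v ∉ S) (hS : (G.deleteEdges {s(v, w)}).IsSeparator S) : w ∉ S :=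
  fun hwS => hS.not_preconnected fun x y =>
    have hreach := hv.reachable_induce_deleteEdges (w := w) hvS
    (hreach x (by rintro rfl; exact x.2 hwS)).symm.trans (hreach y (by rintro rfl; exact y.2 hwS))

lemma IsUniversalVtx.neighborSet_sdiff_subset_of_isSeparator_deleteEdges [Finite V]
    (hv : G.IsUniversalVtx v) (hw : w ≠ v) {S : Finset V} (hvS : v ∉ S) (hwS : w ∉ S)
    (hS : (G.deleteEdges {s(v, w)}).IsSeparator S) : G.neighborSet w \ {v} ⊆ S := by
  rintro u ⟨hwu : G.Adj w u, huv : u ≠ v⟩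
  by_contra huS
  have hwu' : ((G.deleteEdges {s(v, w)}).induce (↑S)ᶜ).Adj ⟨w, hwS⟩ ⟨u, huS⟩ := by
    simp [hwu, hw, huv]
  have hreach := hv.reachable_induce_deleteEdges (w := w) hvS
  have hall (z : ((↑S : Set V)ᶜ : Set V)) :
      ((G.deleteEdges {s(v, w)}).induce (↑S)ᶜ).Reachable ⟨v, hvS⟩ z := by
    by_cases hzw : (z : V) = w
    · rw [show z = ⟨w, hwS⟩ from Subtype.ext hzw]
      exact (hreach ⟨u, huS⟩ hwu.ne').trans hwu'.symm.reachable
    · exact hreach z hzw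
  exact hS.not_preconnected fun x y => (hall x).symm.trans (hall y)

theorem IsUniversalVtx.deg_induce_lt_of_toughness_deleteEdges_lt [Finite V]
    (hv : G.IsUniversalVtx v) (hw : w ≠ v)
    (h : (G.deleteEdges {s(v, w)}).toughness < G.toughness) :
    ((G.induce {v}ᶜ).deg ⟨w, hw⟩ : ℝ≥0∞) < 2 * G.toughness := by
  obtain ⟨S, hS, hlt⟩ := exists_isSeparator_lt_of_toughness_lt h
  have hvS : v ∉ S := fun hvS => by
    rw [IsSeparator, induce_deleteEdges_of_mem (Finset.mem_coe.2 hvS)] at hS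
    rw [induce_deleteEdges_of_mem (Finset.mem_coe.2 hvS)] at hlt
    exact (toughness_le_of_isSeparator hS).not_gt hlt
  have hwS := hv.notMem_of_isSeparator_deleteEdges hvS hS
  have hN := hv.neighborSet_sdiff_subset_of_isSeparator_deleteEdges hw hvS hwS hS
  have hc : componentCount ((G.deleteEdges {s(v, w)}).induce (↑S)ᶜ) ≤ 2 := by
    refine componentCount_le_two (x := ⟨v, hvS⟩) (y := ⟨w, hwS⟩) fun z => ?_
    by_cases hzw : (z : V) = w
    · exact Or.inr (by rw [show z = ⟨w, hwS⟩ from Subtype.ext hzw])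
    · exact Or.inl (hv.reachable_induce_deleteEdges hvS z hzw)
  have hdeg : (G.induce {v}ᶜ).deg ⟨w, hw⟩ ≤ S.card := by
    rw [deg_induce_compl_singleton, ← Set.ncard_coe_finset]
    exact Set.ncard_le_ncard hN
  have hhalf : ((G.induce {v}ᶜ).deg ⟨w, hw⟩ : ℝ≥0∞) / 2 < G.toughness :=
    calc ((G.induce {v}ᶜ).deg ⟨w, hw⟩ : ℝ≥0∞) / 2
        ≤ S.card / componentCount ((G.deleteEdges {s(v, w)}).induce (↑S)ᶜ) :=
          ENNReal.div_le_div (by exact_mod_cast hdeg) (by exact_mod_cast hc)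
      _ < G.toughness := hlt
  rw [mul_comm]
  exact (ENNReal.div_lt_iff (by simp) (by simp)).1 hhalf

theorem IsUniversalVtx.minimallyTough_of_regularOfDegree [Finite V] (hv : G.IsUniversalVtx v)
    {d : ℕ} (hreg : (G.induce {v}ᶜ).RegularOfDegree d) (hd : (d : ℝ≥0∞) < 2 * G.toughness) :
    G.MinimallyTough := by
  have hdel {a b : V} (hab : G.Adj a b) (ha : a ≠ v) :
      (G.deleteEdges {s(a, b)}).toughness < G.toughness :=
    calc (G.deleteEdges {s(a, b)}).toughness ≤ ((G.deg a - 1 : ℕ) : ℝ≥0∞) / 2 :=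
          toughness_deleteEdges_le hab
      _ = d / 2 := by rw [deg_eq_deg_induce_compl_singleton_add_one ha (hv a ha).symm, hreg]; rfl
      _ < G.toughness := (ENNReal.div_lt_iff (by simp) (by simp)).2 (mul_comm 2 G.toughness ▸ hd)
  intro e he
  induction e with
  | h a b =>
    by_cases ha : a = v
    · subst ha
      rw [Sym2.eq_swap]
      exact hdel (G.adj_symm he) (G.ne_of_adj he).symm
    · exact hdel he ha

end UniversalVertex

lemma nonempty_of_toughness_ne_top (h : G.toughness ≠ ⊤) : Nonempty V := by
  obtain ⟨S, hS⟩ := exists_isSeparator_of_toughness_ne_top h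
  by_contra hV
  rw [not_nonempty_iff] at hV
  simp [IsSeparator, componentCount] at hS

end SimpleGraph

namespace NNReal

lemma natCeil_le_iff_coe_le {x : ℝ≥0} {n : ℕ} : ⌈x⌉₊ ≤ n ↔ (x : ℝ≥0∞) ≤ n := by
  rw [Nat.ceil_le]
  norm_cast

lemma lt_natCeil_iff_lt_coe {x : ℝ≥0} {n : ℕ} : n < ⌈x⌉₊ ↔ (n : ℝ≥0∞) < x := by
  rw [Nat.lt_ceil]
  norm_cast

lemma natCeil_two_mul_le_of_le_add_half {t t' : ℝ≥0} (h : (t : ℝ≥0∞) ≤ t' + 1 / 2) :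
    ⌈2 * t⌉₊ ≤ ⌈2 * t'⌉₊ + 1 := by
  have h2 : (t : ℝ≥0∞) * 2 ≤ (t' * 2 + 1 : ℝ≥0) :=
    calc (t : ℝ≥0∞) * 2 ≤ ((t' : ℝ≥0∞) + 1 / 2) * 2 := by gcongr
      _ = (t' * 2 + 1 : ℝ≥0) := by
        rw [add_mul, ENNReal.div_mul_cancel (by simp) (by simp)]
        norm_cast
  rw [← Nat.ceil_add_one (zero_le), mul_comm 2 t, mul_comm 2 t']
  exact Nat.ceil_le_ceil (by exact_mod_cast h2)

end NNReal

/-- Let `G` be a graph with toughness `t` having a universal vertex `v`, and let `t'`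
be the toughness of `G' = G − v`. Then `G` is minimally tough if and only if `G'` is
`⌈2t'⌉`-regular and `⌈2t⌉ = ⌈2t'⌉ + 1`. -/
theorem stmt_14 {V : Type*} [Fintype V] (G : SimpleGraph V) (v : V)
    (hv : G.IsUniversalVtx v) (t t' : ℝ≥0)
    (ht : G.toughness = (t : ℝ≥0∞))
    (ht' : (G.induce ({v}ᶜ : Set V)).toughness = (t' : ℝ≥0∞)) :
    G.MinimallyTough ↔
      (G.induce ({v}ᶜ : Set V)).RegularOfDegree ⌈2 * t'⌉₊ ∧ ⌈2 * t⌉₊ = ⌈2 * t'⌉₊ + 1 := by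
  have hlow (w : ({v}ᶜ : Set V)) : ⌈2 * t'⌉₊ ≤ (G.induce {v}ᶜ).deg w := by
    refine NNReal.natCeil_le_iff_coe_le.2 ?_
    push_cast
    rw [← ht']
    exact two_mul_toughness_le_deg (ht' ▸ ENNReal.coe_ne_top) w
  have hjump : ⌈2 * t⌉₊ ≤ ⌈2 * t'⌉₊ + 1 := NNReal.natCeil_two_mul_le_of_le_add_half
    (ht ▸ ht' ▸ G.toughness_le_toughness_induce_compl_singleton_add_half v)
  constructor
  · intro hmin
    have hup (w : ({v}ᶜ : Set V)) : (G.induce {v}ᶜ).deg w < ⌈2 * t⌉₊ := by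
      refine NNReal.lt_natCeil_iff_lt_coe.2 ?_
      push_cast
      rw [← ht]
      exact hv.deg_induce_lt_of_toughness_deleteEdges_lt w.2 (hmin _ (hv w w.2))
    obtain ⟨w₀⟩ := nonempty_of_toughness_ne_top (ht' ▸ ENNReal.coe_ne_top)
    have h₀ := hlow w₀
    have h₀' := hup w₀
    exact ⟨fun w => le_antisymm (Nat.le_of_lt_succ ((hup w).trans_le hjump)) (hlow w), by omega⟩
  · rintro ⟨hreg, hceil⟩
    refine hv.minimallyTough_of_regularOfDegree hreg ?_
    rw [ht, ← ENNReal.coe_two, ← ENNReal.coe_mul, ← NNReal.lt_natCeil_iff_lt_coe, hceil]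
    exact Nat.lt_succ_self _
end
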